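/- arXiv:1612.01665 — 7 statements merged into one kernel-verified Lean document; each statement's English description precedes it below -/
import Mathlib

section
/- Let p be a prime and m, n nonnegative integers. Then in the polynomial ring ℤ[x,y], (x+y)^(p^(m+n)) ≡ (x^(p^m) + y^(p^m))^(p^n) modulo p^(n+1). -/
open MvPolynomial

theorem stmt4 (p : ℕ) (hp : p.Prime) (m n : ℕ) :
    ((p : MvPolynomial (Fin 2) ℤ) ^ (n + 1)) ∣
      ((X 0 + X 1) ^ p ^ (m + n) - ((X 0) ^ p ^ m + (X 1) ^ p ^ m) ^ p ^ n) := by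
  haveI := Fact.mk hp
  have key : (p : MvPolynomial (Fin 2) ℤ) ∣
      (X 0 + X 1) ^ p ^ m - ((X 0) ^ p ^ m + (X 1) ^ p ^ m) := by
    rw [show ((p : MvPolynomial (Fin 2) ℤ)) = C (p : ℤ) from (map_natCast C p).symm,
      C_dvd_iff_zmod]
    simp [add_pow_char_pow]
  have h2 := dvd_sub_pow_of_dvd_sub key n
  rw [← pow_mul, ← pow_add] at h2
  exact_mod_cast h2
end

section
/- Let p be a prime, m, n nonnegative integers, and x_1,…,x_r variables. Then (x_1 + ⋯ + x_r)^(p^(m+n)) ≡ (x_1^(p^m) + ⋯ + x_r^(p^m))^(p^n) modulo p^(n+1) in ℤ[x_1,…,x_r]. -/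
open MvPolynomial

theorem stmt5 (p : ℕ) (hp : p.Prime) (m n r : ℕ) :
    ((p : MvPolynomial (Fin r) ℤ) ^ (n + 1)) ∣
      ((∑ j : Fin r, X j) ^ p ^ (m + n) - (∑ j : Fin r, (X j) ^ p ^ m) ^ p ^ n) := by
  have hbase : (p : MvPolynomial (Fin r) ℤ) ∣
      ((∑ j : Fin r, X j) ^ p ^ m - ∑ j : Fin r, (X j) ^ p ^ m) := by
    haveI : Fact p.Prime := ⟨hp⟩
    rw [show ((p : MvPolynomial (Fin r) ℤ)) = C (p : ℤ) by simp,
      C_dvd_iff_zmod, RingHom.map_sub, sub_eq_zero]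
    simp only [map_pow, map_sum, MvPolynomial.map_X]
    exact sum_pow_char_pow (R := MvPolynomial (Fin r) (ZMod p)) (p := p) _ _ _
  rw [show p ^ (m + n) = p ^ m * p ^ n from pow_add p m n, pow_mul]
  exact_mod_cast dvd_sub_pow_of_dvd_sub (p := p) hbase n
end

section
/- Let p be a prime and f(x) = Σ c_i x^i a formal power series with coefficients in ℤ_(p). Write f(x)^l = Σ c_i^(l) x^i. Then for all i ≥ 1 and l ≥ 1, ν_p(c_i^(l)) ≥ ν_p(l) − ν_p(i), where ν_p denotes the p-adic valuation (extended to ℤ_(p)). -/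
/-! Comparing the coefficients of `x^(i-1)` in `(f^l)' = l f^(l-1) f'` gives
`i c_i^(l) = l e` with `e` a coefficient of `f^(l-1) f'`, which again lies in `ℤ_(p)`.
Hence `ν_p(i) + ν_p(c_i^(l)) = ν_p(l) + ν_p(e) ≥ ν_p(l)`. -/

open PowerSeries

theorem PowerSeries.natCast_dvd_mul_coeff_pow {R : Type*} [CommSemiring R] (f : R⟦X⟧) (l n : ℕ) :
    (l : R) ∣ n * coeff n (f ^ l) := by
  rcases n with _ | n
  · simp
  · refine ⟨coeff n (f ^ (l - 1) * d⁄dX R f), ?_⟩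
    have h := coeff_derivative (f ^ l) n
    rw [derivative_pow, mul_assoc, ← map_natCast (C (R := R)), coeff_C_mul] at h
    rw [h, mul_comm]
    push_cast
    ring

lemma Rat.mem_padicValuation_integer_iff {p : ℕ} [Fact p.Prime] {q : ℚ} :
    q ∈ (Rat.padicValuation p).integer ↔ 0 ≤ padicValRat p q := by
  rcases eq_or_ne q 0 with rfl | hq
  · simp
  rw [Valuation.mem_integer_iff, Rat.padicValuation, Valuation.coe_mk, MonoidWithZeroHom.coe_mk,
    ZeroHom.coe_mk, if_neg hq, ← WithZero.exp_zero, WithZero.exp_le_exp, neg_nonpos]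

theorem stmt6_general (p : ℕ) [hfact : Fact p.Prime] (f : PowerSeries ℚ)
    (hf : ∀ i, PowerSeries.coeff i f ≠ 0 → 0 ≤ padicValRat p (PowerSeries.coeff i f))
    (i l : ℕ) (hi : 1 ≤ i)
    (hne : PowerSeries.coeff i (f ^ l) ≠ 0) :
    (padicValNat p l : ℤ) - (padicValNat p i : ℤ) ≤
      padicValRat p (PowerSeries.coeff i (f ^ l)) := by
  set T := (Rat.padicValuation p).integer
  have hfT : ∀ n, coeff n f ∈ T := fun n ↦ by
    rcases eq_or_ne (coeff n f) 0 with h | h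
    · exact h ▸ T.zero_mem
    · exact Rat.mem_padicValuation_integer_iff.2 (hf n h)
  set g := f.toSubring T hfT
  have hcoeff : coeff i (f ^ l) = coeff i (g ^ l) := by
    rw [← map_toSubring f T hfT, ← map_pow, coeff_map]
    rfl
  obtain ⟨e, he⟩ := natCast_dvd_mul_coeff_pow g l i
  have heq : (i : ℚ) * coeff i (f ^ l) = l * e := by
    simpa [hcoeff] using congrArg T.subtype he
  have hi0 : (i : ℚ) ≠ 0 := by positivity
  have hle : (l : ℚ) * e ≠ 0 := heq ▸ mul_ne_zero hi0 hne
  have hval := congrArg (padicValRat p) heq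
  rw [padicValRat.mul hi0 hne, padicValRat.mul (left_ne_zero_of_mul hle) (right_ne_zero_of_mul hle),
    padicValRat.of_nat, padicValRat.of_nat] at hval
  linarith [Rat.mem_padicValuation_integer_iff.1 e.2]

theorem stmt6 (p : ℕ) (hp : p.Prime) [hfact : Fact p.Prime] (f : PowerSeries ℚ)
    (hf : ∀ i, PowerSeries.coeff i f ≠ 0 → 0 ≤ padicValRat p (PowerSeries.coeff i f))
    (i l : ℕ) (hi : 1 ≤ i) (hl : 1 ≤ l)
    (hne : PowerSeries.coeff i (f ^ l) ≠ 0) :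
    (padicValNat p l : ℤ) - (padicValNat p i : ℤ) ≤
      padicValRat p (PowerSeries.coeff i (f ^ l)) :=
  stmt6_general p (hfact := hfact) f hf i l hi hne
end

section
/- Let i_1 ≥ 1 and i_2 ≥ 0 be integers. Then ν_2(i_1) + κ_2(i_1) + κ_2(i_2) ≥ ν_2(i_1 + i_2) + 1. -/
private lemma legendre2 (n : ℕ) :
    padicValNat 2 (Nat.factorial n) = n - (Nat.digits 2 n).sum := by
  have := @sub_one_mul_padicValNat_factorial 2 ⟨Nat.prime_two⟩ n
  simpa using this

private lemma valAdd (k : ℕ) :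
    padicValNat 2 (k + 1) + (Nat.digits 2 (k + 1)).sum
      = (Nat.digits 2 k).sum + 1 := by
  have hfac : Nat.factorial (k+1) = (k + 1) * Nat.factorial k := rfl
  have hmul : padicValNat 2 (Nat.factorial (k+1)) = padicValNat 2 (k + 1) + padicValNat 2 (Nat.factorial k) := by
    rw [hfac]
    haveI : Fact (Nat.Prime 2) := ⟨Nat.prime_two⟩
    exact padicValNat.mul (Nat.succ_ne_zero k) (Nat.factorial_ne_zero k)
  have h1 := legendre2 (k + 1)
  have h2 := legendre2 k
  have hs1 : (Nat.digits 2 (k + 1)).sum ≤ k + 1 := Nat.digit_sum_le 2 (k + 1)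
  have hs2 : (Nat.digits 2 k).sum ≤ k := Nat.digit_sum_le 2 k
  omega

private lemma subadd (a b : ℕ) :
    (Nat.digits 2 (a + b)).sum ≤ (Nat.digits 2 a).sum + (Nat.digits 2 b).sum := by
  have hfac : Nat.factorial (a+b) = (a + b).choose a * Nat.factorial a * Nat.factorial b := by
    have := Nat.choose_mul_factorial_mul_factorial (Nat.le_add_right a b)
    rw [Nat.add_sub_cancel_left] at this
    exact this.symm
  have hval : padicValNat 2 (Nat.factorial a) + padicValNat 2 (Nat.factorial b) ≤ padicValNat 2 (Nat.factorial (a+b)) := by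
    haveI : Fact (Nat.Prime 2) := ⟨Nat.prime_two⟩
    rw [hfac, padicValNat.mul
        (Nat.mul_ne_zero (Nat.choose_pos (Nat.le_add_right a b)).ne' (Nat.factorial_ne_zero a))
        (Nat.factorial_ne_zero b),
      padicValNat.mul
        (Nat.choose_pos (Nat.le_add_right a b)).ne' (Nat.factorial_ne_zero a)]
    omega
  have h1 := legendre2 (a + b)
  have h2 := legendre2 a
  have h3 := legendre2 b
  have hs1 : (Nat.digits 2 (a + b)).sum ≤ a + b := Nat.digit_sum_le 2 (a + b)
  have hs2 : (Nat.digits 2 a).sum ≤ a := Nat.digit_sum_le 2 a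
  have hs3 : (Nat.digits 2 b).sum ≤ b := Nat.digit_sum_le 2 b
  omega

private lemma sum_pos {n : ℕ} (hn : n ≠ 0) : 1 ≤ (Nat.digits 2 n).sum := by
  have hne : Nat.digits 2 n ≠ [] := Nat.digits_ne_nil_iff_ne_zero.mpr hn
  have hlast := Nat.getLast_digit_ne_zero 2 hn
  have hmem : (Nat.digits 2 n).getLast hne ∈ Nat.digits 2 n := List.getLast_mem hne
  calc 1 ≤ (Nat.digits 2 n).getLast hne := Nat.one_le_iff_ne_zero.mpr hlast
    _ ≤ (Nat.digits 2 n).sum := List.single_le_sum (fun _ _ => Nat.zero_le _) _ hmem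

theorem stmt13 (i₁ i₂ : ℕ) (h : 1 ≤ i₁) :
    padicValNat 2 (i₁ + i₂) + 1 ≤
      padicValNat 2 i₁ + (Nat.digits 2 i₁).sum + (Nat.digits 2 i₂).sum := by
  obtain ⟨m, rfl⟩ : ∃ m, i₁ = m + 1 := ⟨i₁ - 1, by omega⟩
  have heq : m + 1 + i₂ = m + i₂ + 1 := by omega
  rw [heq]
  have hA := valAdd (m + i₂)
  have hB := valAdd m
  have hC := subadd m i₂
  have hD : 1 ≤ (Nat.digits 2 (m + i₂ + 1)).sum := sum_pos (by omega)
  omega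
end

section
/- Let i_1 ≥ 1 and i_2, …, i_s ≥ 0 be integers. Then ν_2(i_1) + κ_2(i_1) + κ_2(i_2) + ⋯ + κ_2(i_s) ≥ ν_2(i_1 + ⋯ + i_s) + 1. -/
/-!
Write `a = i₁` and `b = i₂ + ⋯ + i_s`. Since `a * C(a+b, b) = (a+b) * C(a+b-1, b)`, the number
`a + b` divides `a * C(a+b, b)`, so `ν(a+b) ≤ ν(a) + ν(C(a+b, b))`. By Kummer,
`ν(C(a+b, b)) = κ(a) + κ(b) - κ(a+b) ≤ κ(a) + κ(b) - 1`, and `κ(b) ≤ κ(i₂) + ⋯ + κ(i_s)` because the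
digit sum is subadditive (Legendre's formula and `m! n! ∣ (m+n)!`).
-/

open Nat

theorem padicValNat_le_of_dvd {p a b : ℕ} [Fact p.Prime] (hb : b ≠ 0) (h : a ∣ b) :
    padicValNat p a ≤ padicValNat p b :=
  (padicValNat_dvd_iff_le hb).mp (pow_padicValNat_dvd.trans h)

theorem Nat.digits_sum_pos (b : ℕ) {n : ℕ} (hn : n ≠ 0) : 0 < (b.digits n).sum :=
  List.sum_pos_iff_exists_pos_nat.mpr
    ⟨_, List.getLast_mem (digits_ne_nil_iff_ne_zero.mpr hn),
      pos_of_ne_zero (getLast_digit_ne_zero b hn)⟩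

section Prime

variable (p : ℕ) [Fact p.Prime]

theorem padicValNat_factorial_add_le (m n : ℕ) :
    padicValNat p m ! + padicValNat p n ! ≤ padicValNat p (m + n)! := by
  rw [← padicValNat.mul (factorial_ne_zero m) (factorial_ne_zero n)]
  exact padicValNat_le_of_dvd (factorial_ne_zero _) (factorial_mul_factorial_dvd_factorial_add m n)

theorem Nat.digits_sum_add_le (m n : ℕ) :
    (p.digits (m + n)).sum ≤ (p.digits m).sum + (p.digits n).sum := by
  have hle := Nat.mul_le_mul_left (p - 1) (padicValNat_factorial_add_le p m n)
  rw [mul_add, sub_one_mul_padicValNat_factorial, sub_one_mul_padicValNat_factorial,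
    sub_one_mul_padicValNat_factorial] at hle
  have := digit_sum_le p m
  have := digit_sum_le p n
  have := digit_sum_le p (m + n)
  omega

theorem padicValNat_add_le_add_padicValNat_choose {a : ℕ} (ha : a ≠ 0) (b : ℕ) :
    padicValNat p (a + b) ≤ padicValNat p a + padicValNat p ((a + b).choose b) := by
  obtain ⟨c, rfl⟩ := exists_eq_succ_of_ne_zero ha
  have hdvd : c + 1 + b ∣ (c + 1) * (c + 1 + b).choose b := by
    refine ⟨(c + b).choose c, ?_⟩
    rw [← choose_symm_add, mul_comm, add_right_comm c 1 b, ← add_one_mul_choose_eq]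
  have hchoose : (c + 1 + b).choose b ≠ 0 := (choose_pos (le_add_left b _)).ne'
  rw [← padicValNat.mul (succ_ne_zero c) hchoose]
  exact padicValNat_le_of_dvd (mul_ne_zero (succ_ne_zero c) hchoose) hdvd

theorem sub_one_mul_padicValNat_add_add_one_le {a : ℕ} (ha : a ≠ 0) (b : ℕ) :
    (p - 1) * padicValNat p (a + b) + 1 ≤
      (p - 1) * padicValNat p a + (p.digits a).sum + (p.digits b).sum := by
  have hval := Nat.mul_le_mul_left (p - 1) (padicValNat_add_le_add_padicValNat_choose p ha b)
  rw [mul_add, sub_one_mul_padicValNat_choose_eq_sub_sum_digits'] at hval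
  have := digits_sum_pos p (n := a + b) (by omega)
  have := digits_sum_add_le p a b
  omega

end Prime

theorem stmt14 (s : ℕ) (i₁ : ℕ) (h : 1 ≤ i₁) (f : Fin s → ℕ) :
    padicValNat 2 (i₁ + ∑ j, f j) + 1 ≤
      padicValNat 2 i₁ + (Nat.digits 2 i₁).sum + ∑ j, (Nat.digits 2 (f j)).sum := by
  have key := sub_one_mul_padicValNat_add_add_one_le 2 (a := i₁) (by omega) (∑ j, f j)
  have hsub : (Nat.digits 2 (∑ j, f j)).sum ≤ ∑ j, (Nat.digits 2 (f j)).sum :=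
    Finset.le_sum_of_subadditive (fun n ↦ (Nat.digits 2 n).sum) (by simp)
      (digits_sum_add_le 2) _ f
  simp only [show 2 - 1 = 1 from rfl, one_mul] at key
  omega
end

section
/- Define g(x) = (1/8)((3 tanh x / tanh 3x) − 1) = tanh²x / (3 + tanh²x), with power series expansion g(x) = Σ_{i≥1} b_i x^(2i). Then for all i ≥ 1, ν_2(b_i) = κ_2(i) − 1. -/
/-- The formal power series of `tanh x` over `ℚ`:
`tanh x = Σ_{i ≥ 1} 2^(2i)(2^(2i)-1) β_(2i) / (2i)! · x^(2i-1)`. -/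
noncomputable def tanhPS : PowerSeries ℚ :=
  PowerSeries.mk fun n =>
    if Odd n then
      2 ^ (n + 1) * (2 ^ (n + 1) - 1) * bernoulli (n + 1) / (Nat.factorial (n + 1))
    else 0

/-!
Since `tanh x = (e^{2x} - 1) / (e^{2x} + 1)`, the relation `g (3 + tanh² x) = tanh² x` becomes
`4 g (2 cosh 2x + 1) = 2 cosh 2x - 2`. After `x ↦ x / 2`, the normalised coefficients
`b_n = 2 n! 2⁻ⁿ [xⁿ] g` satisfy
`3 b_n = [n ≠ 0 even] - ∑_{k < n} C(n, k) (1 + (-1)^(n-k)) b_k`, all of whose weights are even.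
By induction every `b_n` is a 2-adic integer, hence `3 b_{2i} ≡ 1 (mod 2)` for `i ≥ 1` and
`b_{2i}` is a 2-adic unit. Legendre's formula `ν₂((2i)!) = 2i - κ₂(i)` turns this into
`ν₂([x^{2i}] g) = κ₂(i) - 1`.
-/

open PowerSeries Finset Nat

theorem factorial_mul_coeff_mul {R : Type*} [CommSemiring R] (f g : R⟦X⟧) (n : ℕ) :
    (n ! : R) * coeff n (f * g) =
      ∑ k ∈ range (n + 1),
        (n.choose k : R) * (k ! * coeff k f) * ((n - k)! * coeff (n - k) g) := by
  rw [coeff_mul, Nat.sum_antidiagonal_eq_sum_range_succ_mk, mul_sum]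
  refine sum_congr rfl fun k hk => ?_
  rw [← choose_mul_factorial_mul_factorial (Nat.lt_succ_iff.mp (mem_range.mp hk))]
  push_cast
  ring

theorem X_mul_tanhPS_sub_one : (X : ℚ⟦X⟧) * (tanhPS - 1) =
    rescale 4 (bernoulliPowerSeries ℚ) - rescale 2 (bernoulliPowerSeries ℚ) := by
  ext n
  rcases n with _ | n
  · rw [map_sub, coeff_rescale, coeff_rescale]
    simp
  rw [coeff_succ_X_mul, map_sub, map_sub, coeff_rescale, coeff_rescale]
  simp only [bernoulliPowerSeries, tanhPS, coeff_mk, coeff_one, Algebra.algebraMap_self,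
    RingHom.id_apply]
  rcases Nat.even_or_odd n with hn | hn
  · rcases eq_or_ne n 0 with rfl | hn0
    · norm_num [bernoulli_one]
    have hB : bernoulli (n + 1) = 0 := by
      rw [bernoulli_eq_bernoulli'_of_ne_one (by omega)]
      exact bernoulli'_eq_zero_of_odd hn.add_one (by omega)
    simp [Nat.not_odd_iff_even.mpr hn, hn0, hB]
  · have hn0 : n ≠ 0 := by rintro rfl; simp at hn
    rw [if_pos hn, if_neg hn0, show (4 : ℚ) = 2 ^ 2 by norm_num, ← pow_mul]
    field_simp
    ring

theorem tanhPS_mul_exp_add_one :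
    tanhPS * (rescale 2 (exp ℚ) + 1) = rescale 2 (exp ℚ) - 1 := by
  set E := rescale (2 : ℚ) (exp ℚ)
  set B := bernoulliPowerSeries ℚ
  have hE : E - 1 ≠ 0 := fun h => by
    simpa [E] using congrArg (coeff 1) h
  have hB2 : rescale 2 B * (E - 1) = 2 * X := by
    simpa [B, E, map_ofNat] using
      congrArg (rescale (2 : ℚ)) (bernoulliPowerSeries_mul_exp_sub_one ℚ)
  have hB4 : rescale 4 B * (E * E - 1) = 4 * X := by
    have hEE : E * E = rescale 4 (exp ℚ) := by
      rw [exp_mul_exp_eq_exp_add]; norm_num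
    simpa [B, hEE, map_ofNat] using
      congrArg (rescale (4 : ℚ)) (bernoulliPowerSeries_mul_exp_sub_one ℚ)
  have key : (X * (E - 1)) * ((tanhPS - 1) * (E + 1)) = (X * (E - 1)) * (-2) := by
    linear_combination (E - 1) * (E + 1) * X_mul_tanhPS_sub_one + hB4 - (E + 1) * hB2
  linear_combination mul_left_cancel₀ (mul_ne_zero X_ne_zero hE) key

noncomputable def twoCosh : ℚ⟦X⟧ := exp ℚ + rescale (-1) (exp ℚ)

theorem factorial_mul_coeff_twoCosh (n : ℕ) : (n ! : ℚ) * coeff n twoCosh = 1 + (-1) ^ n := by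
  simp only [twoCosh, map_add, coeff_rescale, coeff_exp, Algebra.algebraMap_self,
    RingHom.id_apply]
  field_simp

theorem rescale_half_mul_twoCosh_add_one (g : ℚ⟦X⟧) (hg : g * (3 + tanhPS ^ 2) = tanhPS ^ 2) :
    4 * rescale (1 / 2) g * (twoCosh + 1) = twoCosh - 2 := by
  set h := rescale (1 / 2 : ℚ) g
  set t := rescale (1 / 2 : ℚ) tanhPS
  set e := exp ℚ
  have ht : t * (e + 1) = e - 1 := by
    simpa [t, e, rescale_rescale] using congrArg (rescale (1 / 2 : ℚ)) tanhPS_mul_exp_add_one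
  have hh : h * (3 + t ^ 2) = t ^ 2 := by
    simpa [h, t, map_ofNat] using congrArg (rescale (1 / 2 : ℚ)) hg
  have hee : e * rescale (-1) e = 1 := exp_mul_exp_neg_eq_one
  have he : e ≠ 0 := (isUnit_exp ℚ).ne_zero
  refine mul_left_cancel₀ he ?_
  simp only [twoCosh]
  linear_combination (e + 1) ^ 2 * hh - (h - 1) * (t * (e + 1) + (e - 1)) * ht + (4 * h - 1) * hee

theorem coeff_recurrence_of_mul_twoCosh_add_one (h : ℚ⟦X⟧)
    (hh : 4 * h * (twoCosh + 1) = twoCosh - 2) (n : ℕ) :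
    3 * (2 * (n ! * coeff n h)) = (if n ≠ 0 ∧ Even n then 1 else 0) -
      ∑ k ∈ range n, (n.choose k * (1 + (-1) ^ (n - k)) : ℚ) * (2 * (k ! * coeff k h)) := by
  have hC : C 4 * (h * twoCosh + h) = twoCosh - C 2 := by
    rw [map_ofNat, map_ofNat]
    linear_combination hh
  have hcoeff := congrArg (coeff n) hC
  rw [coeff_C_mul, map_add, map_sub, coeff_C] at hcoeff
  have hprod : (n ! : ℚ) * coeff n (h * twoCosh) =
      ∑ k ∈ range n, (n.choose k * (1 + (-1) ^ (n - k)) : ℚ) * (k ! * coeff k h) +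
        2 * (n ! * coeff n h) := by
    rw [factorial_mul_coeff_mul, sum_range_succ]
    simp only [factorial_mul_coeff_twoCosh, choose_self, Nat.sub_self]
    congr 1
    · exact sum_congr rfl fun k _ => by ring
    · norm_num
      ring
  have hconst : (n ! : ℚ) * (if n = 0 then 2 else 0) = 2 * if n = 0 then 1 else 0 := by
    split_ifs with hn <;> simp [hn]
  have hsum :
      ∑ k ∈ range n, (n.choose k * (1 + (-1) ^ (n - k)) : ℚ) * (2 * (k ! * coeff k h)) =
      2 * ∑ k ∈ range n, (n.choose k * (1 + (-1) ^ (n - k)) : ℚ) * (k ! * coeff k h) := by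
    rw [mul_sum]
    exact sum_congr rfl fun k _ => by ring
  have hrhs : (1 + (-1) ^ n) / 2 - (if n = 0 then 1 else 0) =
      if n ≠ 0 ∧ Even n then (1 : ℚ) else 0 := by
    rcases eq_or_ne n 0 with rfl | hn
    · norm_num
    rcases n.even_or_odd with hn' | hn'
    · simp [hn, hn', hn'.neg_one_pow]
    · simp [hn, Nat.not_even_iff_odd.mpr hn', hn'.neg_one_pow]
  rw [hsum, ← hrhs]
  linear_combination
    (n ! / 2 : ℚ) * hcoeff - 2 * hprod + factorial_mul_coeff_twoCosh n / 2 - hconst / 2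

section PadicRecurrence

variable {p : ℕ} [Fact p.Prime] {u : ℚ}

theorem padicNorm_le_one_of_mul_eq_sub_sum (hu : padicNorm p u = 1) {b c : ℕ → ℚ}
    {W : ℕ → ℕ → ℚ} (hc : ∀ n, padicNorm p (c n) ≤ 1) (hW : ∀ n k, padicNorm p (W n k) ≤ 1)
    (hb : ∀ n, u * b n = c n - ∑ k ∈ range n, W n k * b k) (n : ℕ) :
    padicNorm p (b n) ≤ 1 := by
  induction n using Nat.strong_induction_on with
  | _ n ih =>
    have hsum : padicNorm p (∑ k ∈ range n, W n k * b k) ≤ 1 := by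
      refine padicNorm.sum_le' (fun k hk => ?_) zero_le_one
      rw [padicNorm.mul]
      exact mul_le_one₀ (hW n k) (padicNorm.nonneg _) (ih k (mem_range.mp hk))
    calc padicNorm p (b n) = padicNorm p (u * b n) := by rw [padicNorm.mul, hu, one_mul]
      _ = padicNorm p (c n - ∑ k ∈ range n, W n k * b k) := by rw [hb]
      _ ≤ 1 := padicNorm.sub.trans (max_le (hc n) hsum)

theorem padicNorm_eq_one_of_mul_eq_sub_sum (hu : padicNorm p u = 1) {ι : Type*} {s : Finset ι}
    {w y : ι → ℚ} (hw : ∀ i ∈ s, padicNorm p (w i) < 1) (hy : ∀ i ∈ s, padicNorm p (y i) ≤ 1)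
    {x c : ℚ} (hc : padicNorm p c = 1) (hx : u * x = c - ∑ i ∈ s, w i * y i) :
    padicNorm p x = 1 := by
  have hsum : padicNorm p (∑ i ∈ s, w i * y i) < 1 := by
    refine padicNorm.sum_lt' (fun i hi => ?_) one_pos
    rw [padicNorm.mul]
    exact mul_lt_one_of_nonneg_of_lt_one_left (padicNorm.nonneg _) (hw i hi) (hy i hi)
  have hne : padicNorm p c ≠ padicNorm p (-∑ i ∈ s, w i * y i) := by
    rw [padicNorm.neg, hc]
    exact hsum.ne'
  calc padicNorm p x = padicNorm p (u * x) := by rw [padicNorm.mul, hu, one_mul]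
    _ = 1 := by
      rw [hx, sub_eq_add_neg, padicNorm.add_eq_max_of_ne hne, padicNorm.neg, hc,
        max_eq_left hsum.le]

end PadicRecurrence

theorem padicNorm_two_natCast_mul_one_add_neg_one_pow_lt_one (m j : ℕ) :
    padicNorm 2 (m * (1 + (-1) ^ j)) < 1 := by
  rcases j.even_or_odd with hj | hj
  · rw [hj.neg_one_pow, one_add_one_eq_two, padicNorm.mul]
    have h2 : padicNorm 2 (2 : ℚ) = 1 / 2 := by
      simpa using padicNorm.padicNorm_p_of_prime (p := 2)
    rw [h2]
    linarith [padicNorm.of_nat (p := 2) m]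
  · simp [hj.neg_one_pow]

theorem padicValNat_factorial_two_mul_add_digits_sum (i : ℕ) :
    padicValNat 2 (2 * i)! + (Nat.digits 2 i).sum = 2 * i := by
  have hLegendre := sub_one_mul_padicValNat_factorial (p := 2) i
  have hle := Nat.digit_sum_le 2 i
  rw [padicValNat_factorial_mul]
  omega

theorem padicValRat_coeff_two_mul (g : ℚ⟦X⟧) (i : ℕ)
    (hb : padicNorm 2 (2 * ((2 * i)! * coeff (2 * i) (rescale (1 / 2) g))) = 1) :
    padicValRat 2 (coeff (2 * i) g) = ((Nat.digits 2 i).sum : ℤ) - 1 := by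
  set x := 2 * ((2 * i)! * coeff (2 * i) (rescale (1 / 2 : ℚ) g))
  have hx : x ≠ 0 := fun h => by simp [h] at hb
  have hvx : padicValRat 2 x = 0 := by
    rw [padicNorm.eq_zpow_of_nonzero hx, zpow_eq_one_iff_right₀ (by norm_num) (by norm_num)] at hb
    exact neg_eq_zero.mp hb
  have hfac : ((2 * i)! : ℚ) ≠ 0 := by positivity
  have hcoeff : coeff (2 * i) g = x * 2 ^ (2 * i) / (2 * (2 * i)!) := by
    simp only [x, coeff_rescale]
    field_simp
    rw [mul_assoc, ← mul_pow]
    norm_num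
  have hval : (padicValNat 2 (2 * i)! : ℤ) + (Nat.digits 2 i).sum = 2 * i := by
    exact_mod_cast padicValNat_factorial_two_mul_add_digits_sum i
  rw [hcoeff, padicValRat.div (by positivity) (by positivity),
    padicValRat.mul hx (by positivity), padicValRat.mul two_ne_zero hfac, padicValRat.pow,
    hvx, padicValRat.of_nat (n := (2 * i)!)]
  simp only [show padicValRat 2 2 = 1 by simpa using padicValRat.self (p := 2) one_lt_two]
  omega

theorem stmt16 (g : PowerSeries ℚ)
    (hg : g * (3 + tanhPS ^ 2) = tanhPS ^ 2) (i : ℕ) (hi : 1 ≤ i) :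
    padicValRat 2 (PowerSeries.coeff (2 * i) g) = ((Nat.digits 2 i).sum : ℤ) - 1 := by
  set h := rescale (1 / 2 : ℚ) g
  have hrec := coeff_recurrence_of_mul_twoCosh_add_one h (rescale_half_mul_twoCosh_add_one g hg)
  have h3 : padicNorm 2 (3 : ℚ) = 1 := by
    simpa using (padicNorm.nat_eq_one_iff (p := 2) 3).mpr (by norm_num)
  have hW := padicNorm_two_natCast_mul_one_add_neg_one_pow_lt_one
  have hb := padicNorm_le_one_of_mul_eq_sub_sum h3 (fun n => by split_ifs <;> simp)
    (fun _ _ => (hW _ _).le) hrec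
  refine padicValRat_coeff_two_mul g i <|
    padicNorm_eq_one_of_mul_eq_sub_sum h3 (fun _ _ => hW _ _) (fun k _ => hb k) ?_ (hrec (2 * i))
  simp [show i ≠ 0 by omega]
end

section
/- For integers k ≥ 1 and 1 ≤ s ≤ k, the coefficient of x^(2k) in g(x)^s · h(x)^(2k+1) equals (1/(4^s · 3^k)) · (3^k + (−1)^(k−s) Σ_{i=0}^{s−1} binom(k−s+i, i) · 3^(s−1−i) · 4^i), where h(x) = x/tanh x and g(x) = tanh²x/(3 + tanh²x). -/
/-- The formal power series `h(x) = x / tanh x = Σ_{n even} 2^n β_n x^n / n!` over `ℚ`. -/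
noncomputable def hPS : PowerSeries ℚ :=
  PowerSeries.mk fun n =>
    if Even n then 2 ^ n * bernoulli n / (Nat.factorial n) else 0

/-!
Put `E = e^{2x}`. The Bernoulli generating function gives `h (E - 1) = x (E + 1)`, and
`x tanh x = h(2x) - h(x)` (i.e. `tanh x = 2 coth 2x - coth x`) then gives `tanh (E + 1) = E - 1`;
hence `h tanh = x` and `tanh' = 1 - tanh²`.

Let `c k s` be the coefficient of `x^{2k}` in `g^s h^{2k+1}`. From `3g = tanh² (1 - g)` and
`h² tanh² = x²` we get `3 c (k+1) (s+1) = c k s - c k (s+1)`. Moreover `c k (k+1) = 0` since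
`x² ∣ g`, and `c k 0 = 1` by a residue argument: `h tanh = x` gives
`h^{n+2} tanh' = h^{n+1} - x h^n h'`, whose `x^{n+1}`-coefficient vanishes since
`(n+1) h^n h' = (h^{n+1})'`, while `h^{2k+3} = h^{2k+3} tanh' + x² h^{2k+1}` by `tanh' = 1 - tanh²`.
The closed form obeys the same recurrence and boundary values, by Pascal's rule for the inner sum.
-/

open PowerSeries

section Lagrange

variable {K : Type*} [Field K] [CharZero K] {h T : K⟦X⟧}

theorem coeff_succ_pow_add_two_mul_derivative_eq_zero (hT : h * T = X) (e : ℕ) :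
    coeff (e + 1) (h ^ (e + 2) * d⁄dX K T) = 0 := by
  have hd : h * d⁄dX K T + T * d⁄dX K h = 1 := by
    simpa [smul_eq_mul] using congrArg (d⁄dX K) hT
  have hsplit : h ^ (e + 2) * d⁄dX K T = h ^ (e + 1) - X * (h ^ e * d⁄dX K h) := by
    linear_combination h ^ (e + 1) * hd - h ^ e * d⁄dX K h * hT
  have hcoeff : coeff e (h ^ e * d⁄dX K h) = coeff (e + 1) (h ^ (e + 1)) := by
    have h1 := coeff_derivative (h ^ (e + 1)) e
    rw [derivative_pow, Nat.add_sub_cancel, ← map_natCast (C (R := K)), mul_assoc,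
      coeff_C_mul, mul_comm] at h1
    push_cast at h1
    exact mul_right_cancel₀ (Nat.cast_add_one_ne_zero e) h1
  rw [hsplit, map_sub, coeff_succ_X_mul, hcoeff, sub_self]

theorem coeff_two_mul_pow_two_mul_add_one (hT : h * T = X) (hdT : d⁄dX K T = 1 - T ^ 2)
    (h0 : constantCoeff h = 1) (k : ℕ) : coeff (2 * k) (h ^ (2 * k + 1)) = 1 := by
  induction k with
  | zero => simpa using h0
  | succ k ih =>
    have hsplit : h ^ (2 * k + 3) = h ^ (2 * k + 3) * d⁄dX K T + X ^ 2 * h ^ (2 * k + 1) := by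
      linear_combination (h ^ (2 * k + 1) * (h * T + X)) * hT - h ^ (2 * k + 3) * hdT
    rw [show 2 * (k + 1) + 1 = 2 * k + 3 by ring, show 2 * (k + 1) = 2 * k + 1 + 1 by ring,
      hsplit, map_add, coeff_succ_pow_add_two_mul_derivative_eq_zero hT,
      show 2 * k + 1 + 1 = 2 * k + 2 by ring, coeff_X_pow_mul, ih, zero_add]

end Lagrange

theorem hPS_eq_rescale_bernoulliPowerSeries_add_X :
    hPS = rescale 2 (bernoulliPowerSeries ℚ) + X := by
  ext n
  simp only [hPS, bernoulliPowerSeries, coeff_mk, map_add, coeff_rescale, coeff_X,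
    Algebra.algebraMap_self, RingHom.id_apply]
  rcases n with _ | _ | n
  · norm_num
  · norm_num [bernoulli_one]
  · rw [if_neg (by omega : n + 2 ≠ 1)]
    by_cases h : Even (n + 2)
    · rw [if_pos h]
      ring
    · rw [if_neg h, bernoulli_eq_bernoulli'_of_ne_one (by omega),
        bernoulli'_eq_zero_of_odd (Nat.not_even_iff_odd.1 h) (by omega)]
      simp

theorem X_mul_tanhPS : X * tanhPS = rescale 2 hPS - hPS := by
  ext n
  rcases n with _ | n
  · rw [map_sub, coeff_rescale]
    simp [hPS]
  · rw [coeff_succ_X_mul, map_sub, coeff_rescale]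
    simp only [hPS, tanhPS, coeff_mk]
    by_cases h : Odd n
    · rw [if_pos h, if_pos (Nat.even_add_one.2 (Nat.not_even_iff_odd.2 h))]
      ring
    · rw [if_neg h, if_neg (by simpa [Nat.even_add_one] using Nat.not_odd_iff_even.1 h)]
      ring

theorem exp_sq_eq_rescale : exp ℚ ^ 2 = rescale 2 (exp ℚ) := by
  rw [exp_pow_eq_rescale_exp]
  norm_num

theorem exp_sq_sub_one_ne_zero : exp ℚ ^ 2 - 1 ≠ 0 := by
  intro h
  have := congrArg (coeff 1) h
  simp [exp_sq_eq_rescale, coeff_rescale] at this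

theorem exp_sq_add_one_ne_zero : exp ℚ ^ 2 + 1 ≠ 0 := by
  intro h
  have := congrArg constantCoeff h
  norm_num at this

theorem hPS_mul_exp_sq_sub_one : hPS * (exp ℚ ^ 2 - 1) = X * (exp ℚ ^ 2 + 1) := by
  have h := congrArg (rescale (2 : ℚ)) (bernoulliPowerSeries_mul_exp_sub_one ℚ)
  rw [map_mul, map_sub, map_one, rescale_X, ← exp_sq_eq_rescale, map_ofNat] at h
  rw [hPS_eq_rescale_bernoulliPowerSeries_add_X]
  linear_combination h

theorem tanhPS_mul_exp_sq_add_one : tanhPS * (exp ℚ ^ 2 + 1) = exp ℚ ^ 2 - 1 := by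
  have h2 := congrArg (rescale (2 : ℚ)) hPS_mul_exp_sq_sub_one
  rw [map_mul, map_mul, map_sub, map_add, map_one, rescale_X, map_pow, ← exp_sq_eq_rescale,
    map_ofNat] at h2
  have key : X * ((tanhPS * (exp ℚ ^ 2 + 1)) * (exp ℚ ^ 2 - 1)) =
      X * ((exp ℚ ^ 2 - 1) * (exp ℚ ^ 2 - 1)) := by
    linear_combination
      (exp ℚ ^ 4 - 1) * X_mul_tanhPS + h2 - (exp ℚ ^ 2 + 1) * hPS_mul_exp_sq_sub_one
  exact mul_right_cancel₀ exp_sq_sub_one_ne_zero (mul_left_cancel₀ X_ne_zero key)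

theorem hPS_mul_tanhPS : hPS * tanhPS = X := by
  refine mul_right_cancel₀ exp_sq_add_one_ne_zero ?_
  linear_combination hPS * tanhPS_mul_exp_sq_add_one + hPS_mul_exp_sq_sub_one

theorem derivative_tanhPS : d⁄dX ℚ tanhPS = 1 - tanhPS ^ 2 := by
  have hE : d⁄dX ℚ (exp ℚ ^ 2) = 2 * exp ℚ ^ 2 := by
    rw [derivative_pow, derivative_exp]
    ring
  have hd := congrArg (d⁄dX ℚ) tanhPS_mul_exp_sq_add_one
  simp only [Derivation.leibniz, map_add, map_sub, hE, Derivation.map_one_eq_zero,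
    smul_eq_mul] at hd
  refine mul_right_cancel₀ (pow_ne_zero 2 exp_sq_add_one_ne_zero) ?_
  linear_combination (exp ℚ ^ 2 + 1) * hd +
    (tanhPS * (exp ℚ ^ 2 + 1) - (exp ℚ ^ 2 + 1)) * tanhPS_mul_exp_sq_add_one

theorem constantCoeff_tanhPS : constantCoeff tanhPS = 0 := by
  simp [← coeff_zero_eq_constantCoeff_apply, tanhPS]

theorem constantCoeff_hPS : constantCoeff hPS = 1 := by
  simp [← coeff_zero_eq_constantCoeff_apply, hPS]

section Recurrence

variable {R : Type*} [CommRing R] {g h T : R⟦X⟧}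

theorem three_mul_coeff_pow_succ_mul_pow (hT : h * T = X) (hg : g * (3 + T ^ 2) = T ^ 2)
    (k s : ℕ) :
    3 * coeff (2 * k + 2) (g ^ (s + 1) * h ^ (2 * k + 3)) =
      coeff (2 * k) (g ^ s * h ^ (2 * k + 1)) - coeff (2 * k) (g ^ (s + 1) * h ^ (2 * k + 1)) := by
  have key : 3 * (g ^ (s + 1) * h ^ (2 * k + 3)) =
      X ^ 2 * (g ^ s * h ^ (2 * k + 1) - g ^ (s + 1) * h ^ (2 * k + 1)) := by
    linear_combination g ^ s * h ^ (2 * k + 3) * hg +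
      g ^ s * h ^ (2 * k + 1) * (1 - g) * (h * T + X) * hT
  have := congrArg (coeff (2 * k + 2)) key
  rwa [coeff_X_pow_mul, map_sub, ← map_ofNat C 3, coeff_C_mul] at this

end Recurrence

section Vanishing

variable {K : Type*} [Field K] [CharZero K] {g T : K⟦X⟧}

theorem X_sq_dvd_of_mul_three_add_sq (hT0 : constantCoeff T = 0)
    (hg : g * (3 + T ^ 2) = T ^ 2) : X ^ 2 ∣ g := by
  have hunit : IsUnit (3 + T ^ 2) := by
    rw [isUnit_iff_constantCoeff, map_add, map_pow, hT0, map_ofNat]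
    norm_num
  rw [← hunit.dvd_mul_right, hg]
  exact pow_dvd_pow_of_dvd (X_dvd_iff.2 hT0) 2

theorem coeff_pow_mul_eq_zero_of_lt (hT0 : constantCoeff T = 0) (hg : g * (3 + T ^ 2) = T ^ 2)
    (f : K⟦X⟧) {k s : ℕ} (hks : k < s) : coeff (2 * k) (g ^ s * f) = 0 := by
  obtain ⟨q, rfl⟩ := X_sq_dvd_of_mul_three_add_sq hT0 hg
  rw [mul_pow, ← pow_mul, mul_assoc, coeff_X_pow_mul', if_neg (by omega)]

end Vanishing

def chooseSum (m s : ℕ) : ℚ :=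
  ∑ i ∈ Finset.range s, ((m + i).choose i : ℚ) * 3 ^ (s - 1 - i) * 4 ^ i

theorem chooseSum_zero_left (s : ℕ) : chooseSum 0 s = 4 ^ s - 3 ^ s := by
  have := geom_sum₂_mul (4 : ℚ) 3 s
  norm_num at this
  rw [← this, chooseSum]
  refine Finset.sum_congr rfl fun i _ => ?_
  simp only [zero_add, Nat.choose_self, Nat.cast_one, one_mul, mul_comm]

theorem chooseSum_succ_succ (m s : ℕ) :
    chooseSum (m + 1) (s + 1) = 4 * chooseSum (m + 1) s + chooseSum m (s + 1) := by
  simp only [chooseSum, Finset.sum_range_succ' _ s, Finset.mul_sum]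
  have hterm : ∀ i ∈ Finset.range s,
      ((m + 1 + (i + 1)).choose (i + 1) : ℚ) * 3 ^ (s + 1 - 1 - (i + 1)) * 4 ^ (i + 1) =
        4 * (((m + 1 + i).choose i : ℚ) * 3 ^ (s - 1 - i) * 4 ^ i) +
          ((m + (i + 1)).choose (i + 1) : ℚ) * 3 ^ (s + 1 - 1 - (i + 1)) * 4 ^ (i + 1) := by
    intro i _
    rw [show s + 1 - 1 - (i + 1) = s - 1 - i by omega,
      show m + 1 + (i + 1) = m + 1 + i + 1 by omega, Nat.choose_succ_succ,
      show m + 1 + i = m + (i + 1) by omega]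
    push_cast
    ring
  rw [Finset.sum_congr rfl hterm, Finset.sum_add_distrib]
  simp only [Nat.choose_zero_right, Nat.cast_one, pow_zero]
  ring

def closedForm (k s : ℕ) : ℚ :=
  (1 / (4 ^ s * 3 ^ k)) * (3 ^ k + (-1 : ℚ) ^ (k - s) * chooseSum (k - s) s)

theorem closedForm_zero_right (k : ℕ) : closedForm k 0 = 1 := by
  simp [closedForm, chooseSum]

theorem closedForm_self (k : ℕ) : closedForm k k = 1 / 3 ^ k := by
  rw [closedForm, Nat.sub_self, chooseSum_zero_left]
  field_simp
  ring

theorem three_mul_closedForm_succ_self (k : ℕ) :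
    3 * closedForm (k + 1) (k + 1) = closedForm k k := by
  rw [closedForm_self, closedForm_self, pow_succ]
  field_simp

theorem three_mul_closedForm_succ_succ {k s : ℕ} (hsk : s + 1 ≤ k) :
    3 * closedForm (k + 1) (s + 1) = closedForm k s - closedForm k (s + 1) := by
  obtain ⟨u, rfl⟩ := Nat.exists_eq_add_of_le hsk
  rw [closedForm, closedForm, closedForm, show s + 1 + u + 1 - (s + 1) = u + 1 by omega,
    show s + 1 + u - s = u + 1 by omega, show s + 1 + u - (s + 1) = u by omega,
    chooseSum_succ_succ]
  field_simp
  ring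

theorem eq_closedForm_of_recurrence {c : ℕ → ℕ → ℚ} (hzero : ∀ k, c k 0 = 1)
    (hvanish : ∀ k, c k (k + 1) = 0)
    (hrec : ∀ k s, 3 * c (k + 1) (s + 1) = c k s - c k (s + 1)) {k s : ℕ} (hsk : s ≤ k) :
    c k s = closedForm k s := by
  induction k generalizing s with
  | zero =>
    obtain rfl : s = 0 := by omega
    rw [hzero, closedForm_zero_right]
  | succ k ih =>
    rcases s with _ | s
    · rw [hzero, closedForm_zero_right]
    · rcases Nat.lt_or_ge s k with hs | hs
      · linarith [hrec k s, ih hs.le, ih (s := s + 1) hs, three_mul_closedForm_succ_succ hs]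
      · obtain rfl : s = k := by omega
        linarith [hrec s s, ih le_rfl, hvanish s, three_mul_closedForm_succ_self s]

theorem stmt17_general (k s : ℕ) (hsk : s ≤ k)
    (g : PowerSeries ℚ) (hg : g * (3 + tanhPS ^ 2) = tanhPS ^ 2) :
    PowerSeries.coeff (R := ℚ) (2 * k) (g ^ s * hPS ^ (2 * k + 1)) =
      (1 / (4 ^ s * 3 ^ k)) *
        (3 ^ k + (-1 : ℚ) ^ (k - s) *
          ∑ i ∈ Finset.range s, ((k - s + i).choose i : ℚ) * 3 ^ (s - 1 - i) * 4 ^ i) := by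
  refine eq_closedForm_of_recurrence (c := fun k s => coeff (2 * k) (g ^ s * hPS ^ (2 * k + 1)))
    (fun k => ?_) (fun k => ?_) (fun k s => ?_) hsk
  · simpa using
      coeff_two_mul_pow_two_mul_add_one hPS_mul_tanhPS derivative_tanhPS constantCoeff_hPS k
  · exact coeff_pow_mul_eq_zero_of_lt constantCoeff_tanhPS hg _ k.lt_succ_self
  · simpa only [show 2 * (k + 1) = 2 * k + 2 by ring, show 2 * (k + 1) + 1 = 2 * k + 3 by ring]
      using three_mul_coeff_pow_succ_mul_pow hPS_mul_tanhPS hg k s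

theorem stmt17 (k s : ℕ) (hk : 1 ≤ k) (hs : 1 ≤ s) (hsk : s ≤ k)
    (g : PowerSeries ℚ) (hg : g * (3 + tanhPS ^ 2) = tanhPS ^ 2) :
    PowerSeries.coeff (R := ℚ) (2 * k) (g ^ s * hPS ^ (2 * k + 1)) =
      (1 / (4 ^ s * 3 ^ k)) *
        (3 ^ k + (-1 : ℚ) ^ (k - s) *
          ∑ i ∈ Finset.range s, ((k - s + i).choose i : ℚ) * 3 ^ (s - 1 - i) * 4 ^ i) :=
  stmt17_general k s hsk g hg
end
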